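/- arXiv:1912.00981 — 3 statements merged into one kernel-verified Lean document; each statement's English description precedes it below -/
import Mathlib

section
/- Soundness of the abstract filter: Let T be a finite training set, n : ℕ, Ψ a finite nonempty list of decidable predicates on inputs, and x an input. Let L be the list of abstract training sets consisting of ⟨T, n⟩|#φ for each φ ∈ Ψ with φ(x), followed by ⟨T, n⟩|#¬φ for each φ ∈ Ψ with ¬φ(x), and let A be the left fold of ⊔ over L starting from its head (L is nonempty since every φ ∈ Ψ either holds or fails at x). Then for every T' ∈ Δₙ(T) and every φ' ∈ Ψ, filter(T', φ', x) ∈ γ(A). -/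
/-- The n-poisoning perturbed set: all subsets of `T` missing at most `n` elements. -/
def Perturb {α : Type*} [DecidableEq α] (T : Finset α) (n : ℕ) : Set (Finset α) :=
  {T' | T' ⊆ T ∧ (T \ T').card ≤ n}

/-- Concretization of an abstract training set `⟨T, n⟩`. -/
def aGamma {α : Type*} [DecidableEq α] (A : Finset α × ℕ) : Set (Finset α) :=
  Perturb A.1 A.2

/-- Join of abstract training sets. -/
def aJoin {α : Type*} [DecidableEq α] (A B : Finset α × ℕ) : Finset α × ℕ :=
  (A.1 ∪ B.1, max ((A.1 \ B.1).card + B.2) ((B.1 \ A.1).card + A.2))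

variable {X : Type*} [DecidableEq X] {k : ℕ}

/-- Abstract restriction `⟨T, n⟩|#φ = ⟨T|φ, min(n, |T|φ|)⟩`, for a (decidable,
Bool-valued) predicate on inputs applied to the first component. -/
def aRestrict (T : Finset (X × Fin k)) (n : ℕ) (φ : X × Fin k → Prop)
    [DecidablePred φ] : Finset (X × Fin k) × ℕ :=
  (T.filter φ, min n (T.filter φ).card)

/-- The concrete filter: `T'|φ'` if `φ'(x)` holds, and `T'|¬φ'` otherwise. -/
def cFilter (T' : Finset (X × Fin k)) (φ : X → Bool) (x : X) : Finset (X × Fin k) :=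
  if φ x then T'.filter (fun e => φ e.1 = true) else T'.filter (fun e => φ e.1 = false)

/-- The list of abstract training sets `⟨T, n⟩|#φ` for each `φ ∈ Ψ` with `φ(x)`,
followed by `⟨T, n⟩|#¬φ` for each `φ ∈ Ψ` with `¬φ(x)`. -/
def filterList (T : Finset (X × Fin k)) (n : ℕ) (Ψ : List (X → Bool)) (x : X) :
    List (Finset (X × Fin k) × ℕ) :=
  (Ψ.filter fun φ => φ x).map (fun φ => aRestrict T n (fun e => φ e.1 = true)) ++
  (Ψ.filter fun φ => !(φ x)).map (fun φ => aRestrict T n (fun e => φ e.1 = false))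

/-
Every `T' ∈ Δₙ(T)` filtered by a predicate `p` stays within `n` deletions of `T|p`, and
trivially within `|T|p|` of it, so it lies in `γ(⟨T, n⟩|#p)`. The join over-approximates both
arguments: a set `S` within `n₁` deletions of `T₁` misses from `T₁ ∪ T₂` at most those
`n₁` elements plus `T₂ \ T₁`. Hence the fold of joins over-approximates each entry of the
list, and the concrete filter by `φ'` is the restriction of `T'` to one of these entries.
-/

section Join

variable {α : Type*} [DecidableEq α]

theorem aJoin_comm (A B : Finset α × ℕ) : aJoin A B = aJoin B A := by
  simp only [aJoin, Finset.union_comm, max_comm]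

theorem aGamma_subset_aJoin_left (A B : Finset α × ℕ) : aGamma A ⊆ aGamma (aJoin A B) := by
  rintro S ⟨hSA, hcard⟩
  refine ⟨hSA.trans Finset.subset_union_left, ?_⟩
  have hmissing : (A.1 ∪ B.1) \ S ⊆ (A.1 \ S) ∪ (B.1 \ A.1) := by
    intro a
    simp only [Finset.mem_sdiff, Finset.mem_union]
    tauto
  calc ((A.1 ∪ B.1) \ S).card ≤ (A.1 \ S).card + (B.1 \ A.1).card :=
        (Finset.card_le_card hmissing).trans (Finset.card_union_le _ _)
    _ ≤ max ((A.1 \ B.1).card + B.2) ((B.1 \ A.1).card + A.2) := by omega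

theorem aGamma_subset_aJoin_right (A B : Finset α × ℕ) : aGamma B ⊆ aGamma (aJoin A B) :=
  aJoin_comm B A ▸ aGamma_subset_aJoin_left B A

theorem aGamma_subset_foldl_aJoin {L : List (Finset α × ℕ)} {acc B : Finset α × ℕ}
    (hB : B ∈ acc :: L) : aGamma B ⊆ aGamma (L.foldl aJoin acc) := by
  induction L generalizing acc B with
  | nil => rw [List.mem_singleton.mp hB]; rfl
  | cons C L ih =>
    rcases List.mem_cons.mp hB with rfl | hB
    · exact (aGamma_subset_aJoin_left B C).trans (ih List.mem_cons_self)
    · rcases List.mem_cons.mp hB with rfl | hB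
      · exact (aGamma_subset_aJoin_right acc B).trans (ih List.mem_cons_self)
      · exact ih (List.mem_cons_of_mem _ hB)

theorem aGamma_subset_foldl_aJoin_headI {L : List (Finset α × ℕ)} {B : Finset α × ℕ}
    (hB : B ∈ L) : aGamma B ⊆ aGamma (L.tail.foldl aJoin L.headI) := by
  cases L with
  | nil => exact absurd hB List.not_mem_nil
  | cons A L => exact aGamma_subset_foldl_aJoin hB

end Join

theorem filter_mem_aGamma_aRestrict {T T' : Finset (X × Fin k)} {n : ℕ}
    (hT' : T' ∈ Perturb T n) (p : X × Fin k → Prop) [DecidablePred p] :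
    T'.filter p ∈ aGamma (aRestrict T n p) := by
  obtain ⟨hT'T, hcard⟩ := hT'
  refine ⟨Finset.filter_subset_filter p hT'T,
    le_min ?_ (Finset.card_le_card Finset.sdiff_subset)⟩
  have hmissing : T.filter p \ T'.filter p ⊆ T \ T' := by
    intro a
    simp only [Finset.mem_sdiff, Finset.mem_filter]
    tauto
  exact (Finset.card_le_card hmissing).trans hcard

theorem afilter_sound_general (T : Finset (X × Fin k)) (n : ℕ)
    (Ψ : List (X → Bool)) (x : X)
    (T' : Finset (X × Fin k)) (hT' : T' ∈ Perturb T n)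
    (φ' : X → Bool) (hφ' : φ' ∈ Ψ) :
    cFilter T' φ' x ∈
      aGamma ((filterList T n Ψ x).tail.foldl aJoin (filterList T n Ψ x).headI) := by
  unfold cFilter
  split_ifs with hx
  · have hmem : aRestrict T n (fun e => φ' e.1 = true) ∈ filterList T n Ψ x :=
      List.mem_append_left _ (List.mem_map_of_mem (List.mem_filter.mpr ⟨hφ', hx⟩))
    exact aGamma_subset_foldl_aJoin_headI hmem (filter_mem_aGamma_aRestrict hT' _)
  · have hmem : aRestrict T n (fun e => φ' e.1 = false) ∈ filterList T n Ψ x :=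
      List.mem_append_right _
        (List.mem_map_of_mem (List.mem_filter.mpr ⟨hφ', by simpa using hx⟩))
    exact aGamma_subset_foldl_aJoin_headI hmem (filter_mem_aGamma_aRestrict hT' _)

/-- Soundness of the abstract filter: for a nonempty list `Ψ` of predicates,
every `T' ∈ Δₙ(T)` and every `φ' ∈ Ψ`, the concrete filter of `T'` by `φ'` lies in
the concretization of the left fold of the join over the list `filterList T n Ψ x`
starting from its head. -/
theorem afilter_sound (hk : 1 ≤ k) (T : Finset (X × Fin k)) (n : ℕ)
    (Ψ : List (X → Bool)) (hΨ : Ψ ≠ []) (x : X)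
    (T' : Finset (X × Fin k)) (hT' : T' ∈ Perturb T n)
    (φ' : X → Bool) (hφ' : φ' ∈ Ψ) :
    cFilter T' φ' x ∈
      aGamma ((filterList T n Ψ x).tail.foldl aJoin (filterList T n Ψ x).headI) :=
  afilter_sound_general T n Ψ x T' hT' φ' hφ'
end

section
/- Soundness of abstract restriction by a symbolic real-valued predicate: Fix a feature map f : 𝒳 → ℝ and reals a ≤ b. For every finite training set T, every n : ℕ, every T' ∈ Δₙ(T), and every threshold τ with a ≤ τ < b, the restriction of T' to the predicate (f(x) ≤ τ) lies in γ(⟨T, n⟩|#(f ≤ a) ⊔ ⟨T, n⟩|#(f < b)); that is, T'|(f ≤ τ) ∈ γ(arestr(⟨T, n⟩, ρ)) where ρ is the symbolic predicate f ≤ [a, b). -/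
variable {X : Type*} [DecidableEq X] {k : ℕ}

/-- Abstract restriction by the symbolic predicate `ρ = (f ≤ [a, b))`:
`arestr(⟨T, n⟩, ρ) = ⟨T, n⟩|#(f ≤ a) ⊔ ⟨T, n⟩|#(f < b)`. -/
noncomputable def aRestrictSymb (T : Finset (X × Fin k)) (n : ℕ)
    (f : X → ℝ) (a b : ℝ) : Finset (X × Fin k) × ℕ :=
  aJoin (aRestrict T n (fun e => f e.1 ≤ a)) (aRestrict T n (fun e => f e.1 < b))

/-- Soundness of abstract restriction by a symbolic real-valued predicate:
for `a ≤ b`, every `T' ∈ Δₙ(T)`, and every threshold `τ ∈ [a, b)`,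
`T'|(f ≤ τ) ∈ γ(⟨T, n⟩|#(f ≤ a) ⊔ ⟨T, n⟩|#(f < b))`. -/
theorem symb_restrict_sound (hk : 1 ≤ k) (f : X → ℝ) (a b : ℝ) (hab : a ≤ b)
    (T : Finset (X × Fin k)) (n : ℕ)
    (T' : Finset (X × Fin k)) (hT' : T' ∈ Perturb T n)
    (τ : ℝ) (hτa : a ≤ τ) (hτb : τ < b) :
    T'.filter (fun e => f e.1 ≤ τ) ∈ aGamma (aRestrictSymb T n f a b) := by
    classical
  obtain ⟨hsub, hcard⟩ := hT'
  set Ta := T.filter (fun e => f e.1 ≤ a) with hTa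
  set Tb := T.filter (fun e => f e.1 < b) with hTb
  set Tf := T'.filter (fun e => f e.1 ≤ τ) with hTf
  have hTfb : Tf ⊆ Tb := by
    intro e he
    simp only [hTf, hTb, Finset.mem_filter] at he ⊢
    exact ⟨hsub he.1, lt_of_le_of_lt he.2 hτb⟩
  constructor
  · -- subset
    show Tf ⊆ Ta ∪ Tb
    exact hTfb.trans Finset.subset_union_right
  · show ((Ta ∪ Tb) \ Tf).card ≤ max ((Ta \ Tb).card + min n Tb.card) ((Tb \ Ta).card + min n Ta.card)
    have hab' : Ta ⊆ Tb := by
      intro e he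
      simp only [hTa, hTb, Finset.mem_filter] at he ⊢
      exact ⟨he.1, lt_of_le_of_lt (he.2.trans hτa) hτb⟩
    have hun : Ta ∪ Tb = Tb := Finset.union_eq_right.mpr hab'
    rw [hun]
    have hsub2 : Tb \ Tf ⊆ (Tb \ Ta) ∪ (Ta \ T') := by
      intro e he
      simp only [Finset.mem_sdiff, Finset.mem_union] at he ⊢
      by_cases hea : e ∈ Ta
      · right
        refine ⟨hea, fun heT' => he.2 ?_⟩
        simp only [hTa, Finset.mem_filter] at hea
        simp only [hTf, Finset.mem_filter]
        exact ⟨heT', hea.2.trans hτa⟩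
      · exact Or.inl ⟨he.1, hea⟩
    have h1 : (Ta \ T').card ≤ min n Ta.card := by
      refine le_min ?_ (Finset.card_le_card (Finset.sdiff_subset))
      refine le_trans (Finset.card_le_card ?_) hcard
      exact Finset.sdiff_subset_sdiff (Finset.filter_subset _ _) (le_refl _)
    calc (Tb \ Tf).card ≤ ((Tb \ Ta) ∪ (Ta \ T')).card := Finset.card_le_card hsub2
      _ ≤ (Tb \ Ta).card + (Ta \ T').card := Finset.card_union_le _ _
      _ ≤ (Tb \ Ta).card + min n Ta.card := by omega
      _ ≤ _ := le_max_right _ _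
end

section
/- Soundness of abstract restriction by the negation of a symbolic real-valued predicate: Fix a feature map f : 𝒳 → ℝ and reals a ≤ b. For every finite training set T, every n : ℕ, every T' ∈ Δₙ(T), and every threshold τ with a ≤ τ < b, the restriction of T' to the predicate (f(x) > τ) lies in γ(⟨T, n⟩|#(f > a) ⊔ ⟨T, n⟩|#(f ≥ b)). -/
variable {X : Type*} [DecidableEq X] {k : ℕ}

/-- Soundness of abstract restriction by the negation of a symbolic real-valued
predicate: for `a ≤ b`, every `T' ∈ Δₙ(T)`, and every threshold `τ ∈ [a, b)`,
the restriction of `T'` to `(f(x) > τ)` lies in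
`γ(⟨T, n⟩|#(f > a) ⊔ ⟨T, n⟩|#(f ≥ b))`. -/
theorem symb_restrict_neg_sound (hk : 1 ≤ k) (f : X → ℝ) (a b : ℝ) (hab : a ≤ b)
    (T : Finset (X × Fin k)) (n : ℕ)
    (T' : Finset (X × Fin k)) (hT' : T' ∈ Perturb T n)
    (τ : ℝ) (hτa : a ≤ τ) (hτb : τ < b) :
    T'.filter (fun e => f e.1 > τ) ∈
      aGamma (aJoin (aRestrict T n (fun e => f e.1 > a))
                    (aRestrict T n (fun e => f e.1 ≥ b))) := by
  obtain ⟨hsub, hcard⟩ := hT'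
  set A : Finset (X × Fin k) := T.filter (fun e => f e.1 > a) with hA
  set B : Finset (X × Fin k) := T.filter (fun e => f e.1 ≥ b) with hB
  set Xf : Finset (X × Fin k) := T'.filter (fun e => f e.1 > τ) with hX
  have hXA : Xf ⊆ A := by
    intro e he
    simp only [hX, hA, Finset.mem_filter] at he ⊢
    exact ⟨hsub he.1, lt_of_le_of_lt hτa he.2⟩
  have hBA : B ⊆ A := by
    intro e he
    simp only [hA, hB, Finset.mem_filter] at he ⊢
    exact ⟨he.1, lt_of_lt_of_le (lt_of_le_of_lt hτa hτb) he.2⟩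
  have hUnion : A ∪ B = A := Finset.union_eq_left.mpr hBA
  constructor
  · show Xf ⊆ A ∪ B
    rw [hUnion]; exact hXA
  · show ((A ∪ B) \ Xf).card ≤ _
    rw [hUnion]
    have h1 : A \ Xf ⊆ (A \ B) ∪ (B \ Xf) := by
      intro e he
      rw [Finset.mem_sdiff] at he
      by_cases hb : e ∈ B
      · exact Finset.mem_union_right _ (Finset.mem_sdiff.mpr ⟨hb, he.2⟩)
      · exact Finset.mem_union_left _ (Finset.mem_sdiff.mpr ⟨he.1, hb⟩)
    have h2 : B \ Xf ⊆ T \ T' := by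
      intro e he
      rw [Finset.mem_sdiff] at he ⊢
      simp only [hB, hX, Finset.mem_filter] at he
      refine ⟨he.1.1, fun h => he.2 ⟨h, lt_of_lt_of_le hτb he.1.2⟩⟩
    have h3 : (B \ Xf).card ≤ min n B.card := by
      refine le_min (le_trans (Finset.card_le_card h2) hcard) ?_
      exact Finset.card_le_card (Finset.sdiff_subset)
    calc (A \ Xf).card ≤ ((A \ B) ∪ (B \ Xf)).card := Finset.card_le_card h1
      _ ≤ (A \ B).card + (B \ Xf).card := Finset.card_union_le _ _
      _ ≤ (A \ B).card + min n B.card := by omega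
      _ ≤ _ := le_max_left _ _
end
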